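/- Let k ∈ ℕ, λ₀ = (2(k+1)π)², and define f : ℝ³ → ℝ by f(θ₁,θ₂,λ) = 9cos³(√λ) − cos(√λ) − (cos θ₁ + 1)(3cos(√λ) + cos θ₂), where √λ denotes Real.sqrt λ. Then at the point P = (0, 0, λ₀): f(P) = 0; all three first partial derivatives of f vanish at P; and the second partial derivatives at P are ∂²f/∂θ₁² = 4, ∂²f/∂θ₂² = 2, ∂²f/∂λ² = −5/λ₀, with all mixed second partials ∂²f/∂θ₁∂θ₂ = ∂²f/∂θ₁∂λ = ∂²f/∂θ₂∂λ = 0. Hence the Hessian of f at P is the indefinite nondegenerate matrix diag(4, 2, −5/λ₀), so the zero set of f has a conical (Dirac) singularity at P. -/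

import Mathlib

/-!
The θ-derivatives are explicit trigonometry. Along θ₁ = θ₂ = 0 the dispersion function is
P(cos √λ) with P(c) = 9c³ − 7c − 2, so P(1) = 0 and P'(1) = 20. Where cos √λ = 1 the map
λ ↦ cos √λ is critical (sin √λ = 0) with second derivative −1/(4λ), so the second-order chain
rule gives ∂²f/∂λ² = P'(1) · (−1/(4λ)) = −5/λ.
-/

open Real

/-- The free dispersion function of the graphyne quantum graph,
f(θ₁,θ₂,λ) = 9cos³(√λ) − cos(√λ) − (cos θ₁ + 1)(3cos(√λ) + cos θ₂). -/
noncomputable def graphyneDispersion (θ₁ θ₂ l : ℝ) : ℝ :=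
  9 * (Real.cos (Real.sqrt l)) ^ 3 - Real.cos (Real.sqrt l) -
    (Real.cos θ₁ + 1) * (3 * Real.cos (Real.sqrt l) + Real.cos θ₂)

open Filter Topology

theorem hasDerivAt_deriv_comp {p p' h h' : ℝ → ℝ} {x p'' h'' : ℝ}
    (hp : ∀ y, HasDerivAt p (p' y) y) (hp' : HasDerivAt p' p'' (h x))
    (hh : ∀ᶠ y in 𝓝 x, HasDerivAt h (h' y) y) (hh' : HasDerivAt h' h'' x) :
    HasDerivAt (deriv (p ∘ h)) (p'' * h' x ^ 2 + p' (h x) * h'') x := by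
  have hderiv : deriv (p ∘ h) =ᶠ[𝓝 x] fun y => p' (h y) * h' y :=
    hh.mono fun y hy => ((hp (h y)).comp y hy).deriv
  refine (((hp'.comp x hh.self_of_nhds).mul hh').congr_of_eventuallyEq hderiv).congr_deriv ?_
  simp only [Function.comp_apply]
  ring

theorem hasDerivAt_cos_sqrt {l : ℝ} (hl : 0 < l) :
    HasDerivAt (fun t => cos √t) (-sin √l / (2 * √l)) l := by
  refine ((hasDerivAt_cos _).comp l (hasDerivAt_sqrt hl.ne')).congr_deriv ?_
  ring

theorem hasDerivAt_neg_sin_sqrt_div {l : ℝ} (hl : 0 < l) :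
    HasDerivAt (fun t => -sin √t / (2 * √t)) ((sin √l / √l - cos √l) / (4 * l)) l := by
  have hs : 0 < √l := sqrt_pos.2 hl
  have hsin : HasDerivAt (fun t => -sin √t) (-(cos √l * (1 / (2 * √l)))) l :=
    ((hasDerivAt_sin _).comp l (hasDerivAt_sqrt hl.ne')).neg
  have hden := (hasDerivAt_sqrt hl.ne').const_mul 2
  refine (hsin.div hden (by positivity)).congr_deriv ?_
  field_simp
  rw [sq_sqrt hl.le]
  ring

theorem hasDerivAt_graphyneDispersion_fst (θ₁ θ₂ l : ℝ) :
    HasDerivAt (fun x => graphyneDispersion x θ₂ l)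
      (sin θ₁ * (3 * cos √l + cos θ₂)) θ₁ := by
  refine ((((hasDerivAt_cos θ₁).add_const 1).mul_const (3 * cos √l + cos θ₂)).const_sub
    (9 * cos √l ^ 3 - cos √l)).congr_deriv ?_
  ring

theorem hasDerivAt_graphyneDispersion_snd (θ₁ θ₂ l : ℝ) :
    HasDerivAt (fun y => graphyneDispersion θ₁ y l) ((cos θ₁ + 1) * sin θ₂) θ₂ := by
  refine ((((hasDerivAt_cos θ₂).const_add (3 * cos √l)).const_mul (cos θ₁ + 1)).const_sub
    (9 * cos √l ^ 3 - cos √l)).congr_deriv ?_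
  ring

theorem deriv_graphyneDispersion_fst (θ₂ l : ℝ) :
    deriv (fun x => graphyneDispersion x θ₂ l) = fun x => sin x * (3 * cos √l + cos θ₂) :=
  funext fun x => (hasDerivAt_graphyneDispersion_fst x θ₂ l).deriv

theorem deriv_graphyneDispersion_snd (θ₁ l : ℝ) :
    deriv (fun y => graphyneDispersion θ₁ y l) = fun y => (cos θ₁ + 1) * sin y :=
  funext fun y => (hasDerivAt_graphyneDispersion_snd θ₁ y l).deriv

def graphyneRadial (c : ℝ) : ℝ := 9 * c ^ 3 - 7 * c - 2

theorem graphyneDispersion_zero_zero :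
    (fun l => graphyneDispersion 0 0 l) = graphyneRadial ∘ fun t => cos √t := by
  funext l
  simp only [graphyneDispersion, graphyneRadial, Function.comp, cos_zero]
  ring

theorem hasDerivAt_graphyneRadial (c : ℝ) :
    HasDerivAt graphyneRadial (27 * c ^ 2 - 7) c :=
  ((((hasDerivAt_pow 3 c).const_mul 9).sub ((hasDerivAt_id' c).const_mul 7)).sub_const 2)
    |>.congr_deriv (by ring)

theorem hasDerivAt_deriv_graphyneRadial (c : ℝ) :
    HasDerivAt (fun c : ℝ => 27 * c ^ 2 - 7) (54 * c) c :=
  (((hasDerivAt_pow 2 c).const_mul 27).sub_const 7).congr_deriv (by ring)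

theorem hasDerivAt_graphyneDispersion_radial {l : ℝ} (hl : 0 < l) :
    HasDerivAt (fun l => graphyneDispersion 0 0 l)
      ((27 * cos √l ^ 2 - 7) * (-sin √l / (2 * √l))) l := by
  rw [graphyneDispersion_zero_zero]
  exact (hasDerivAt_graphyneRadial _).comp l (hasDerivAt_cos_sqrt hl)

theorem hasDerivAt_deriv_graphyneDispersion_radial {l : ℝ} (hl : 0 < l) :
    HasDerivAt (deriv fun l => graphyneDispersion 0 0 l)
      (54 * cos √l * (-sin √l / (2 * √l)) ^ 2 +
        (27 * cos √l ^ 2 - 7) * ((sin √l / √l - cos √l) / (4 * l))) l := by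
  rw [graphyneDispersion_zero_zero]
  exact hasDerivAt_deriv_comp hasDerivAt_graphyneRadial (hasDerivAt_deriv_graphyneRadial _)
    ((eventually_gt_nhds hl).mono fun t ht => hasDerivAt_cos_sqrt ht)
    (hasDerivAt_neg_sin_sqrt_div hl)

/-- At P = (0,0,(2(k+1)π)²) the free dispersion function vanishes together with its
gradient, and its Hessian is the indefinite nondegenerate matrix diag(4, 2, −5/lam0):
a conical (Dirac) singularity of the Bloch variety. -/
theorem graphyne_dirac_point_D_eq_two (k : ℕ) (lam0 : ℝ)
    (hlam0 : lam0 = (2 * ((k : ℝ) + 1) * π) ^ 2) :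
    graphyneDispersion 0 0 lam0 = 0 ∧
    deriv (fun x => graphyneDispersion x 0 lam0) 0 = 0 ∧
    deriv (fun y => graphyneDispersion 0 y lam0) 0 = 0 ∧
    deriv (fun l => graphyneDispersion 0 0 l) lam0 = 0 ∧
    deriv (deriv (fun x => graphyneDispersion x 0 lam0)) 0 = 4 ∧
    deriv (deriv (fun y => graphyneDispersion 0 y lam0)) 0 = 2 ∧
    deriv (deriv (fun l => graphyneDispersion 0 0 l)) lam0 = -5 / lam0 ∧
    deriv (fun y => deriv (fun x => graphyneDispersion x y lam0) 0) 0 = 0 ∧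
    deriv (fun l => deriv (fun x => graphyneDispersion x 0 l) 0) lam0 = 0 ∧
    deriv (fun l => deriv (fun y => graphyneDispersion 0 y l) 0) lam0 = 0 ∧
    Matrix.det (Matrix.diagonal ![(4 : ℝ), 2, -5 / lam0]) ≠ 0 ∧
    -5 / lam0 < 0 := by
  have hl : 0 < lam0 := by rw [hlam0]; positivity
  have hsqrt : √lam0 = (k + 1 : ℕ) * (2 * π) := by
    rw [hlam0, sqrt_sq (by positivity)]; push_cast; ring
  have hcos : cos √lam0 = 1 := by rw [hsqrt, cos_nat_mul_two_pi]
  have hsin : sin √lam0 = 0 := sin_eq_zero_iff_cos_eq.2 (Or.inl hcos)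
  refine ⟨?_, ?_, ?_, ?_, ?_, ?_, ?_, ?_, ?_, ?_, ?_, div_neg_of_neg_of_pos (by norm_num) hl⟩
  · norm_num [graphyneDispersion, hcos]
  · simp [deriv_graphyneDispersion_fst]
  · simp [deriv_graphyneDispersion_snd]
  · simp [(hasDerivAt_graphyneDispersion_radial hl).deriv, hsin]
  · rw [deriv_graphyneDispersion_fst, ((hasDerivAt_sin 0).mul_const _).deriv, hcos]; norm_num
  · rw [deriv_graphyneDispersion_snd, ((hasDerivAt_sin 0).const_mul _).deriv]; norm_num
  · rw [(hasDerivAt_deriv_graphyneDispersion_radial hl).deriv, hcos, hsin]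
    field_simp
    ring
  · simp [deriv_graphyneDispersion_fst]
  · simp [deriv_graphyneDispersion_fst]
  · simp [deriv_graphyneDispersion_snd]
  · simp [Matrix.det_diagonal, Fin.prod_univ_succ, hl.ne']
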